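/- The polynomial ψ ∘ f = β_{1,1} ∘ β_{10,1} ∘ f is a clean Belyĭ polynomial: every complex critical value of ψ ∘ f lies in {0, 1}, and every complex root of (ψ ∘ f) - 1 has multiplicity exactly 2. Here f(x) = x^12 - (12/11)x^11 + 1, β_{10,1}(x) = (11^11/10^10) x^10 (1-x), and β_{1,1}(x) = 4x(1-x). -/
import Mathlib


open Polynomial

/-- The polynomial `f(x) = x^12 - (12/11) x^11 + 1`, over `ℂ`. -/
noncomputable def f : Polynomial ℂ := X ^ 12 - C (12 / 11) * X ^ 11 + 1

/-- The Belyĭ polynomial `β_{10,1}(x) = (11^11/10^10) x^10 (1-x)`, over `ℂ`. -/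
noncomputable def beta101 : Polynomial ℂ := C (11 ^ 11 / 10 ^ 10) * X ^ 10 * (1 - X)

/-- The Belyĭ polynomial `β_{1,1}(x) = 4x(1-x)`, over `ℂ`. -/
noncomputable def beta11 : Polynomial ℂ := 4 * X * (1 - X)

/-- The composition `ψ ∘ f = β_{1,1} ∘ β_{10,1} ∘ f`. -/
noncomputable def psif : Polynomial ℂ := beta11.comp (beta101.comp f)


lemma evalf (z : ℂ) : f.eval z = z ^ 12 - 12 / 11 * z ^ 11 + 1 := by simp [f]
lemma evalb101 (w : ℂ) : beta101.eval w = 11 ^ 11 / 10 ^ 10 * w ^ 10 * (1 - w) := by simp [beta101]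
lemma evalb11 (u : ℂ) : beta11.eval u = 4 * u * (1 - u) := by simp [beta11]
lemma evaldf (z : ℂ) : (derivative f).eval z = 12 * z ^ 10 * (z - 1) := by
  simp [f, derivative_pow]; ring
lemma evaldb101 (w : ℂ) :
    (derivative beta101).eval w = 11 ^ 11 / 10 ^ 10 * w ^ 9 * (10 - 11 * w) := by
  simp [beta101, derivative_pow]; ring
lemma evaldb11 (u : ℂ) : (derivative beta11).eval u = 4 - 8 * u := by
  simp [beta11]; ring

lemma comp_beta11 (p : Polynomial ℂ) : beta11.comp p = 4 * p * (1 - p) := by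
  simp [beta11]

noncomputable def gg : Polynomial ℂ := beta101.comp f

lemma eval_gg (z : ℂ) : gg.eval z = beta101.eval (f.eval z) := by simp [gg, eval_comp]

lemma eval_dgg (z : ℂ) :
    (derivative gg).eval z = (derivative beta101).eval (f.eval z) * (derivative f).eval z := by
  simp [gg, derivative_comp, eval_comp]; ring

-- case analysis on vanishing of g' at a point
lemma dgg_cases (z : ℂ) (h : (derivative gg).eval z = 0) :
    gg.eval z = 0 ∨ gg.eval z = 1 := by
  rw [eval_dgg, evaldb101, evaldf] at h
  have c0 : (11 ^ 11 / 10 ^ 10 : ℂ) ≠ 0 := by norm_num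
  rcases mul_eq_zero.1 h with h1 | h1
  · rcases mul_eq_zero.1 h1 with h2 | h2
    · rcases mul_eq_zero.1 h2 with h3 | h3
      · exact absurd h3 c0
      · -- f.eval z = 0
        have hw : f.eval z = 0 := by
          have := pow_eq_zero_iff (n := 9) (by norm_num) |>.1 h3
          exact this
        left; rw [eval_gg, evalb101, hw]; ring
    · -- f.eval z = 10/11
      have hw : f.eval z = 10 / 11 := by linear_combination -h2 / 11
      right; rw [eval_gg, evalb101, hw]; norm_num
  · rcases mul_eq_zero.1 h1 with h2 | h2
    · rcases mul_eq_zero.1 h2 with h3 | h3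
      · norm_num at h3
      · have hz : z = 0 := pow_eq_zero_iff (n := 10) (by norm_num) |>.1 h3
        have hw : f.eval z = 1 := by rw [hz, evalf]; norm_num
        left; rw [eval_gg, evalb101, hw]; ring
    · have hz : z = 1 := by linear_combination h2
      have hw : f.eval z = 10 / 11 := by rw [hz, evalf]; norm_num
      right; rw [eval_gg, evalb101, hw]; norm_num

lemma key : psif - 1 = C (-1) * (C 2 * gg - 1) * (C 2 * gg - 1) := by
  have : psif = 4 * gg * (1 - gg) := by rw [psif, ← gg, comp_beta11]
  rw [this]
  have hC2 : (C 2 : Polynomial ℂ) = 2 := map_ofNat C 2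
  have hC1 : (C (-1) : Polynomial ℂ) = -1 := by simp
  rw [hC2, hC1]; ring

lemma gg0 : gg.eval 0 = 0 := by
  have h0 : f.eval 0 = 1 := by rw [evalf]; norm_num
  rw [eval_gg, h0, evalb101]; norm_num


/-- `ψ ∘ f` is a clean Belyĭ polynomial: all its critical values lie in `{0, 1}` and
every root of `(ψ ∘ f) - 1` has multiplicity exactly `2`. -/
theorem psif_clean_belyi :
    (∀ z : ℂ, (derivative psif).eval z = 0 →
      psif.eval z = 0 ∨ psif.eval z = 1) ∧
    (∀ z : ℂ, (psif - 1).IsRoot z → (psif - 1).rootMultiplicity z = 2) := by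
  constructor
  · intro z h
    rw [psif, ← gg, derivative_comp, eval_mul, eval_comp, evaldb11] at h
    have hev : psif.eval z = 4 * gg.eval z * (1 - gg.eval z) := by
      rw [psif, ← gg, eval_comp, evalb11]
    rcases mul_eq_zero.1 h with h1 | h1
    · rcases dgg_cases z h1 with h2 | h2 <;> [left; left] <;> rw [hev, h2] <;> ring
    · -- gg.eval z = 1/2
      have hu : gg.eval z = 1 / 2 := by linear_combination -h1 / 8
      right; rw [hev, hu]; norm_num
  · intro z hz
    set q : Polynomial ℂ := C 2 * gg - 1 with hq
    have hq0 : q ≠ 0 := by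
      intro h
      have := congrArg (eval 0) h
      simp [hq, gg0] at this
    have hroot : q.IsRoot z := by
      have := hz
      rw [key] at this
      simp only [IsRoot, eval_mul, eval_C] at this
      rcases mul_eq_zero.1 this with h1 | h1
      · rcases mul_eq_zero.1 h1 with h2 | h2
        · norm_num at h2
        · exact h2
      · exact h1
    have hu : gg.eval z = 1 / 2 := by
      have : q.eval z = 0 := hroot
      simp only [hq, eval_sub, eval_mul, eval_C, eval_one] at this
      linear_combination this / 2
    have hd : ¬ (derivative q).IsRoot z := by
      intro h
      have hdg : (derivative gg).eval z = 0 := by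
        have h2 : (derivative q).eval z = 2 * (derivative gg).eval z := by
          simp [hq]
        have h3 : 2 * (derivative gg).eval z = 0 := by rw [← h2]; exact h
        linear_combination h3 / 2
      rcases dgg_cases z hdg with h2 | h2 <;> rw [hu] at h2 <;> norm_num at h2
    have h1 : 0 < q.rootMultiplicity z := (rootMultiplicity_pos hq0).2 hroot
    have h2 : ¬ 1 < q.rootMultiplicity z := by
      rw [one_lt_rootMultiplicity_iff_isRoot hq0]
      tauto
    have hq1 : q.rootMultiplicity z = 1 := by omega
    have hCne : (C (-1) : Polynomial ℂ) ≠ 0 := by simp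
    rw [key, ← hq]
    rw [rootMultiplicity_mul (by exact mul_ne_zero (mul_ne_zero hCne hq0) hq0),
      rootMultiplicity_mul (mul_ne_zero hCne hq0), rootMultiplicity_C, hq1]
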